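/- arXiv:1709.05886 — 5 statements merged into one kernel-verified Lean document; each statement's English description precedes it below -/
import Mathlib

section
/- For all integers n ≥ 0 and 0 ≤ k ≤ ⌊n/2⌋, the identity ∑_{i=k}^{⌊n/2⌋} C(n+1, 2i+1) · C(i, k) = 2^{n-2k} · C(n-k, k) holds, where C(a,b) denotes the binomial coefficient. -/
/-!
Write `S n k = ∑ᵢ C(n, 2i+1) C(i, k)` and `E n k = ∑ᵢ C(n, 2i) C(i, k)`. Pascal's rule in `n`
gives `S (n+1) = S n + E n`, and Pascal's rule in both `n` and `i` gives
`E (n+1) (k+1) = E n (k+1) + S n k + S n (k+1)`; eliminating `E` yields the Chebyshev-type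
recurrence `S (n+2) (k+1) = 2 S (n+1) (k+1) + S n k`, which `2^m C(k+m, k)` also satisfies
at `n = 2k+m+1` (Pascal again). Induction on `k` and then on `m`, starting from the sum
`S (m+1) 0 = 2^m` of the odd binomial coefficients, finishes the proof.
-/

open Finset

namespace Nat

def oddChooseSum (n k : ℕ) : ℕ := ∑ i ∈ range (n + 1), n.choose (2 * i + 1) * i.choose k

def evenChooseSum (n k : ℕ) : ℕ := ∑ i ∈ range (n + 1), n.choose (2 * i) * i.choose k

theorem oddChooseSum_succ (n k : ℕ) :
    oddChooseSum (n + 1) k = oddChooseSum n k + evenChooseSum n k := by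
  simp only [oddChooseSum, evenChooseSum, choose_succ_succ', add_mul, sum_add_distrib,
    sum_range_succ _ (n + 1), choose_eq_zero_of_lt (show n < 2 * (n + 1) by omega),
    choose_eq_zero_of_lt (show n < 2 * (n + 1) + 1 by omega), zero_mul, add_zero]
  ring

theorem evenChooseSum_succ (n k : ℕ) :
    evenChooseSum (n + 1) k =
      evenChooseSum n k + ∑ i ∈ range (n + 1), n.choose (2 * i + 1) * (i + 1).choose k := by
  have hlast : n.choose (2 * (n + 1)) * (n + 1).choose k = 0 := by
    rw [choose_eq_zero_of_lt (by omega), zero_mul]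
  have hpascal : ∀ i, (n + 1).choose (2 * (i + 1)) =
      n.choose (2 * i + 1) + n.choose (2 * (i + 1)) := fun i => choose_succ_succ' n (2 * i + 1)
  rw [evenChooseSum, evenChooseSum, sum_range_succ' (fun i => (n + 1).choose (2 * i) * i.choose k),
    sum_range_succ' (fun i => n.choose (2 * i) * i.choose k)]
  simp only [hpascal, add_mul, sum_add_distrib, mul_zero, choose_zero_right]
  rw [sum_range_succ (fun i => n.choose (2 * (i + 1)) * (i + 1).choose k), hlast]
  ring

theorem oddChooseSum_add_two_succ (n k : ℕ) :
    oddChooseSum (n + 2) (k + 1) = 2 * oddChooseSum (n + 1) (k + 1) + oddChooseSum n k := by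
  have hE : evenChooseSum (n + 1) (k + 1) =
      evenChooseSum n (k + 1) + oddChooseSum n k + oddChooseSum n (k + 1) := by
    simp only [evenChooseSum_succ, oddChooseSum, choose_succ_succ', mul_add, sum_add_distrib,
      add_assoc]
  rw [oddChooseSum_succ (n + 1), oddChooseSum_succ n, hE]
  ring

theorem oddChooseSum_eq_zero {n k : ℕ} (h : n ≤ 2 * k) : oddChooseSum n k = 0 := by
  refine sum_eq_zero fun i _ => ?_
  rcases lt_or_ge i k with hi | hi
  · rw [choose_eq_zero_of_lt hi, mul_zero]
  · rw [choose_eq_zero_of_lt (by omega), zero_mul]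

theorem oddChooseSum_succ_zero (m : ℕ) : oddChooseSum (m + 1) 0 = 2 ^ m := by
  suffices oddChooseSum (m + 1) 0 = 2 ^ m ∧ evenChooseSum (m + 1) 0 = 2 ^ m from this.1
  induction m with
  | zero => decide
  | succ m ih =>
    have hE : evenChooseSum (m + 2) 0 = evenChooseSum (m + 1) 0 + oddChooseSum (m + 1) 0 := by
      simp only [evenChooseSum_succ, oddChooseSum, choose_zero_right]
    rw [oddChooseSum_succ, hE, ih.1, ih.2, pow_succ]
    omega

theorem oddChooseSum_two_mul_add_one (k m : ℕ) :
    oddChooseSum (2 * k + m + 1) k = 2 ^ m * (k + m).choose k := by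
  induction k generalizing m with
  | zero => simpa using oddChooseSum_succ_zero m
  | succ k ihk =>
    induction m with
    | zero =>
      rw [show 2 * (k + 1) + 0 + 1 = 2 * k + 1 + 2 by omega, oddChooseSum_add_two_succ,
        oddChooseSum_eq_zero (by omega), ihk 0]
      simp
    | succ m ihm =>
      rw [show 2 * (k + 1) + (m + 1) + 1 = 2 * k + (m + 2) + 2 by omega,
        oddChooseSum_add_two_succ, show 2 * k + (m + 2) + 1 = 2 * (k + 1) + m + 1 by omega, ihm,
        show 2 * k + (m + 2) = 2 * k + (m + 1) + 1 by omega, ihk,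
        show k + 1 + (m + 1) = k + m + 1 + 1 by omega, choose_succ_succ',
        show k + (m + 1) = k + m + 1 by omega, show k + 1 + m = k + m + 1 by omega]
      ring

theorem oddChooseSum_eq_sum_Icc (n k : ℕ) :
    oddChooseSum (n + 1) k =
      ∑ i ∈ Icc k (n / 2), (n + 1).choose (2 * i + 1) * i.choose k := by
  refine (sum_subset (fun i hi => ?_) fun i _ hi => ?_).symm
  · simp only [mem_Icc, mem_range] at hi ⊢
    omega
  · rw [mem_Icc, not_and_or] at hi
    rcases hi with hi | hi
    · rw [choose_eq_zero_of_lt (not_le.mp hi), mul_zero]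
    · rw [choose_eq_zero_of_lt (show n + 1 < 2 * i + 1 by omega), zero_mul]

end Nat

open Nat in
/-- For all integers `n ≥ 0` and `0 ≤ k ≤ ⌊n/2⌋`,
`∑_{i=k}^{⌊n/2⌋} C(n+1, 2i+1) · C(i, k) = 2^{n-2k} · C(n-k, k)`. -/
theorem stmt1 (n k : ℕ) (hk : k ≤ n / 2) :
    ∑ i ∈ Finset.Icc k (n / 2), (n + 1).choose (2 * i + 1) * i.choose k =
      2 ^ (n - 2 * k) * (n - k).choose k := by
  obtain ⟨m, rfl⟩ : ∃ m, n = 2 * k + m := ⟨n - 2 * k, by omega⟩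
  rw [← oddChooseSum_eq_sum_Icc, oddChooseSum_two_mul_add_one,
    show 2 * k + m - 2 * k = m by omega, show 2 * k + m - k = k + m by omega]
end

section
/- Let G = C_{n+1} ≀ S₂ act on ℂ[a₁,a₂,b₁,b₂], where each copy of C_{n+1} acts as diag(ζ,ζ^{-1}) on (a₁,a₂) and on (b₁,b₂) respectively, and S₂ swaps aᵢ with bᵢ. Then the invariant ring ℂ[a₁,a₂,b₁,b₂]^G is generated as a ℂ-algebra by the nine elements x₁ = u₁+u₂, x₂ = v₁+v₂, x₃ = w₁+w₂, x₄ = (u₁−u₂)², x₅ = (v₁−v₂)², x₆ = (w₁−w₂)², x₇ = (u₁−u₂)(v₁−v₂), x₈ = (u₁−u₂)(w₁−w₂), x₉ = (v₁−v₂)(w₁−w₂), where u₁ = a₁^{n+1}, v₁ = a₁a₂, w₁ = a₂^{n+1}, u₂ = b₁^{n+1}, v₂ = b₁b₂, w₂ = b₂^{n+1}. -/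
/-!
A monomial `a₁^i a₂^j b₁^k b₂^l` is fixed by `C_{n+1} × C_{n+1}` iff `i ≡ j` and `k ≡ l`
mod `n + 1`, i.e. iff it is a product of `u₁, v₁, w₁, u₂, v₂, w₂`. An invariant `p` is a
combination of such monomials `m` and, being fixed by `τ`, of their symmetrizations `m + τ m`.
Writing `s_f = f + τ f` and `δ_f = f - τ f` for `f` among `u₁, …, w₂`, the identities
`2 (f y + τ (f y)) = s_f (y + τ y) + δ_f (y - τ y)` and
`2 δ_g (f y - τ (f y)) = s_f δ_g (y - τ y) + δ_g δ_f (y + τ y)` show, by induction on the monomial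
`y`, that `y + τ y` and every `δ_g (y - τ y)` lie in the algebra generated by the `s_f` and the
`δ_f δ_g`, that is, by `x₁, …, x₉`.
-/

open MvPolynomial

section SwapSymmetrization

variable {K R : Type*} [CommRing K] [Invertible (2 : K)] [CommRing R] [Algebra K R]
  (A : Subalgebra K R) (τ : R →ₐ[K] R)

theorem Subalgebra.mem_of_two_mul_mem {x : R} (h : 2 * x ∈ A) : x ∈ A := by
  have : x = (⅟2 : K) • (2 * x) := by
    rw [show (2 : R) * x = (2 : K) • x by rw [two_smul, two_mul], smul_smul, invOf_mul_self,
      one_smul]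
  rw [this]
  exact A.smul_mem h _

theorem Subalgebra.mem_of_add_map_mem {x : R} (hx : τ x = x) (h : x + τ x ∈ A) : x ∈ A :=
  A.mem_of_two_mul_mem (K := K) (by rw [two_mul]; nth_rw 2 [← hx]; exact h)

theorem Subalgebra.mul_add_map_mul_mem {a y : R} (ha : a + τ a ∈ A) (hy : y + τ y ∈ A)
    (hay : (a - τ a) * (y - τ y) ∈ A) : a * y + τ (a * y) ∈ A := by
  refine A.mem_of_two_mul_mem (K := K) ?_
  have : 2 * (a * y + τ (a * y)) = (a + τ a) * (y + τ y) + (a - τ a) * (y - τ y) := by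
    rw [map_mul]; ring
  rw [this]
  exact A.add_mem (A.mul_mem ha hy) hay

theorem Subalgebra.mul_mul_sub_map_mul_mem {a y δ : R} (ha : a + τ a ∈ A) (hy : y + τ y ∈ A)
    (hδa : δ * (a - τ a) ∈ A) (hδy : δ * (y - τ y) ∈ A) : δ * (a * y - τ (a * y)) ∈ A := by
  refine A.mem_of_two_mul_mem (K := K) ?_
  have : 2 * (δ * (a * y - τ (a * y))) =
      (a + τ a) * (δ * (y - τ y)) + δ * (a - τ a) * (y + τ y) := by
    rw [map_mul]; ring
  rw [this]
  exact A.add_mem (A.mul_mem ha hδy) (A.mul_mem hδa hy)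

theorem Subalgebra.add_map_mem_of_mem_closure {ι : Type*} {p q : ι → R}
    (hτp : ∀ i, τ (p i) = q i) (hτq : ∀ i, τ (q i) = p i)
    (hs : ∀ i, p i + q i ∈ A) (hd : ∀ i j, (p i - q i) * (p j - q j) ∈ A) {x : R}
    (hx : x ∈ Submonoid.closure (Set.range p ∪ Set.range q)) : x + τ x ∈ A := by
  -- the antisymmetric part `x - τ x` need not lie in `A`, only its products with the `p j - q j`
  suffices x + τ x ∈ A ∧ ∀ j, (p j - q j) * (x - τ x) ∈ A from this.1
  induction hx using Submonoid.closure_induction_left with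
  | one => simpa using A.add_mem A.one_mem A.one_mem
  | mul_left a ha y _ ih =>
    obtain ⟨hy, hy'⟩ := ih
    suffices a + τ a ∈ A ∧ (∀ j, (p j - q j) * (a - τ a) ∈ A) ∧ (a - τ a) * (y - τ y) ∈ A from
      ⟨A.mul_add_map_mul_mem τ this.1 hy this.2.2,
        fun j => A.mul_mul_sub_map_mul_mem τ this.1 hy (this.2.1 j) (hy' j)⟩
    rcases ha with ⟨i, rfl⟩ | ⟨i, rfl⟩
    · simp only [hτp]
      exact ⟨hs i, fun j => hd j i, hy' i⟩
    · simp only [hτq, add_comm (q i), ← neg_sub (p i), neg_mul, mul_neg, neg_mem_iff]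
      exact ⟨hs i, fun j => hd j i, hy' i⟩

end SwapSymmetrization

section Generators

variable {K R : Type*} [CommRing K] [CommRing R] [Algebra K R]

def swapGenerators (u₁ v₁ w₁ u₂ v₂ w₂ : R) : Set R :=
  {u₁ + u₂, v₁ + v₂, w₁ + w₂,
    (u₁ - u₂) ^ 2, (v₁ - v₂) ^ 2, (w₁ - w₂) ^ 2,
    (u₁ - u₂) * (v₁ - v₂), (u₁ - u₂) * (w₁ - w₂),
    (v₁ - v₂) * (w₁ - w₂)}

variable {u₁ v₁ w₁ u₂ v₂ w₂ : R}

theorem map_eq_self_of_mem_adjoin_swapGenerators_of_fixed (φ : R →ₐ[K] R) (hu₁ : φ u₁ = u₁)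
    (hv₁ : φ v₁ = v₁) (hw₁ : φ w₁ = w₁) (hu₂ : φ u₂ = u₂) (hv₂ : φ v₂ = v₂) (hw₂ : φ w₂ = w₂)
    {x : R} (hx : x ∈ Algebra.adjoin K (swapGenerators u₁ v₁ w₁ u₂ v₂ w₂)) : φ x = x := by
  refine AlgHom.eqOn_adjoin_iff (ψ := AlgHom.id K R) |>.mpr ?_ hx
  simp [Set.EqOn, swapGenerators, hu₁, hv₁, hw₁, hu₂, hv₂, hw₂]

theorem map_eq_self_of_mem_adjoin_swapGenerators_of_swap (τ : R →ₐ[K] R) (hu₁ : τ u₁ = u₂)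
    (hv₁ : τ v₁ = v₂) (hw₁ : τ w₁ = w₂) (hu₂ : τ u₂ = u₁) (hv₂ : τ v₂ = v₁) (hw₂ : τ w₂ = w₁)
    {x : R} (hx : x ∈ Algebra.adjoin K (swapGenerators u₁ v₁ w₁ u₂ v₂ w₂)) : τ x = x := by
  refine AlgHom.eqOn_adjoin_iff (ψ := AlgHom.id K R) |>.mpr ?_ hx
  simp only [Set.EqOn, swapGenerators, Set.mem_insert_iff, Set.mem_singleton_iff]
  rintro _ (rfl | rfl | rfl | rfl | rfl | rfl | rfl | rfl | rfl) <;>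
    simp only [map_add, map_sub, map_mul, map_pow, hu₁, hv₁, hw₁, hu₂, hv₂, hw₂,
      AlgHom.id_apply] <;>
    ring

theorem add_map_mem_adjoin_swapGenerators [Invertible (2 : K)] (τ : R →ₐ[K] R)
    (hu₁ : τ u₁ = u₂) (hv₁ : τ v₁ = v₂) (hw₁ : τ w₁ = w₂)
    (hu₂ : τ u₂ = u₁) (hv₂ : τ v₂ = v₁) (hw₂ : τ w₂ = w₁) {x : R}
    (hx : x ∈ Submonoid.closure {u₁, v₁, w₁, u₂, v₂, w₂}) :
    x + τ x ∈ Algebra.adjoin K (swapGenerators u₁ v₁ w₁ u₂ v₂ w₂) := by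
  have hgen : ∀ y ∈ swapGenerators u₁ v₁ w₁ u₂ v₂ w₂,
      y ∈ Algebra.adjoin K (swapGenerators u₁ v₁ w₁ u₂ v₂ w₂) :=
    fun _ hy => Algebra.subset_adjoin hy
  refine Subalgebra.add_map_mem_of_mem_closure _ τ (p := ![u₁, v₁, w₁]) (q := ![u₂, v₂, w₂])
    ?_ ?_ ?_ ?_ ?_
  · intro i; fin_cases i <;> simpa
  · intro i; fin_cases i <;> simpa
  · intro i; fin_cases i <;> exact hgen _ (by simp [swapGenerators])
  · intro i j
    fin_cases i <;> fin_cases j <;> exact hgen _ (by simp [swapGenerators, sq, mul_comm])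
  · exact Submonoid.closure_mono (by simp [Set.insert_subset_iff, Matrix.range_cons]) hx

end Generators

section Torus

theorem MvPolynomial.coeff_aeval_C_mul_X {R σ : Type*} [CommSemiring R] (g : σ → R)
    (p : MvPolynomial σ R) (d : σ →₀ ℕ) :
    coeff d (aeval (fun i => C (g i) * X i) p) = coeff d p * d.prod fun i k => g i ^ k := by
  classical
  induction p using MvPolynomial.induction_on' with
  | monomial e c =>
    have : aeval (fun i => C (g i) * X i) (monomial e c) =
        monomial e (c * e.prod fun i k => g i ^ k) := by
      simp only [monomial_eq, map_mul, aeval_C, map_finsuppProd, map_pow, aeval_X, mul_pow,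
        Finsupp.prod_mul, algebraMap_eq]
      ring
    rw [this, coeff_monomial, coeff_monomial]
    split_ifs with h
    · rw [h]
    · rw [zero_mul]
  | add p q hp hq => rw [map_add, coeff_add, coeff_add, hp, hq, add_mul]

theorem MvPolynomial.prod_pow_eq_one_of_aeval_C_mul_X_eq_self {K σ : Type*} [Field K]
    {g : σ → K} {p : MvPolynomial σ K} (hp : aeval (fun i => C (g i) * X i) p = p)
    {d : σ →₀ ℕ} (hd : d ∈ p.support) : (d.prod fun i k => g i ^ k) = 1 := by
  have := coeff_aeval_C_mul_X g p d
  rw [hp] at this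
  exact (mul_eq_left₀ (mem_support_iff.mp hd)).mp this.symm

theorem IsPrimitiveRoot.modEq_of_pow_mul_inv_pow_eq_one {K : Type*} [Field K] {ζ : K} {k : ℕ}
    (hζ : IsPrimitiveRoot ζ k) (hk : k ≠ 0) {a b : ℕ} (h : ζ ^ a * ζ⁻¹ ^ b = 1) :
    a ≡ b [MOD k] := by
  rw [inv_pow, mul_inv_eq_one₀ (pow_ne_zero _ (hζ.ne_zero hk))] at h
  rwa [hζ.eq_orderOf, ← (hζ.isOfFinOrder hk).pow_eq_pow_iff_modEq]

variable {K : Type*} [Field K] {ζ : K} {k : ℕ} {p : MvPolynomial (Fin 4) K} {d : Fin 4 →₀ ℕ}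

theorem modEq_zero_one_of_aeval_eq_self (hζ : IsPrimitiveRoot ζ k) (hk : k ≠ 0)
    (hp : aeval ![C ζ * X 0, C ζ⁻¹ * X 1, X 2, X 3] p = p) (hd : d ∈ p.support) :
    d 0 ≡ d 1 [MOD k] := by
  have hg : ![C ζ * X 0, C ζ⁻¹ * X 1, X 2, X 3] = fun i => C (![ζ, ζ⁻¹, 1, 1] i) * X i := by
    funext i; fin_cases i <;> simp
  refine hζ.modEq_of_pow_mul_inv_pow_eq_one hk ?_
  have := prod_pow_eq_one_of_aeval_C_mul_X_eq_self (g := ![ζ, ζ⁻¹, 1, 1]) (hg ▸ hp) hd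
  rw [Finsupp.prod_fintype _ _ (by simp), Fin.prod_univ_four] at this
  simpa using this

theorem modEq_two_three_of_aeval_eq_self (hζ : IsPrimitiveRoot ζ k) (hk : k ≠ 0)
    (hp : aeval ![X 0, X 1, C ζ * X 2, C ζ⁻¹ * X 3] p = p) (hd : d ∈ p.support) :
    d 2 ≡ d 3 [MOD k] := by
  have hg : ![X 0, X 1, C ζ * X 2, C ζ⁻¹ * X 3] = fun i => C (![1, 1, ζ, ζ⁻¹] i) * X i := by
    funext i; fin_cases i <;> simp
  refine hζ.modEq_of_pow_mul_inv_pow_eq_one hk ?_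
  have := prod_pow_eq_one_of_aeval_C_mul_X_eq_self (g := ![1, 1, ζ, ζ⁻¹]) (hg ▸ hp) hd
  rw [Finsupp.prod_fintype _ _ (by simp), Fin.prod_univ_four] at this
  simpa using this

end Torus

theorem pow_mul_pow_mem_closure {M : Type*} [CommMonoid M] (x y : M) {m a b : ℕ}
    (h : a ≡ b [MOD m]) : x ^ a * y ^ b ∈ Submonoid.closure {x ^ m, x * y, y ^ m} := by
  have hx : x ^ m ∈ Submonoid.closure {x ^ m, x * y, y ^ m} := Submonoid.subset_closure (by simp)
  have hxy : x * y ∈ Submonoid.closure {x ^ m, x * y, y ^ m} := Submonoid.subset_closure (by simp)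
  have hy : y ^ m ∈ Submonoid.closure {x ^ m, x * y, y ^ m} := Submonoid.subset_closure (by simp)
  rcases le_total b a with hba | hab
  · obtain ⟨l, hl⟩ := (Nat.modEq_iff_dvd' hba).mp h.symm
    obtain rfl : a = b + m * l := by omega
    rw [pow_add, pow_mul, mul_right_comm, ← mul_pow]
    exact mul_mem (pow_mem hxy _) (pow_mem hx _)
  · obtain ⟨l, hl⟩ := (Nat.modEq_iff_dvd' hab).mp h
    obtain rfl : b = a + m * l := by omega
    rw [pow_add, pow_mul, ← mul_assoc, ← mul_pow]
    exact mul_mem (pow_mem hxy _) (pow_mem hy _)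

theorem MvPolynomial.monomial_mem_closure_of_modEq {R : Type*} [CommSemiring R] {k : ℕ}
    {d : Fin 4 →₀ ℕ} (h₀₁ : d 0 ≡ d 1 [MOD k]) (h₂₃ : d 2 ≡ d 3 [MOD k]) :
    monomial d (1 : R) ∈ Submonoid.closure
      {X 0 ^ k, X 0 * X 1, X 1 ^ k, X 2 ^ k, X 2 * X 3, X 3 ^ k} := by
  rw [monomial_eq, C_1, one_mul, Finsupp.prod_fintype _ _ (by simp), Fin.prod_univ_four,
    mul_assoc]
  refine mul_mem (Submonoid.closure_mono ?_ (pow_mul_pow_mem_closure _ _ h₀₁))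
    (Submonoid.closure_mono ?_ (pow_mul_pow_mem_closure _ _ h₂₃)) <;>
  simp [Set.insert_subset_iff]

theorem MvPolynomial.add_map_mem_of_forall_mem_support {K σ : Type*} [CommSemiring K]
    (A : Subalgebra K (MvPolynomial σ K)) (τ : MvPolynomial σ K →ₐ[K] MvPolynomial σ K)
    {p : MvPolynomial σ K} (h : ∀ d ∈ p.support, monomial d 1 + τ (monomial d 1) ∈ A) :
    p + τ p ∈ A := by
  rw [p.as_sum, map_sum, ← Finset.sum_add_distrib]
  refine A.sum_mem fun d hd => ?_
  rw [← mul_one (coeff d p), ← smul_eq_mul, ← smul_monomial, map_smul, ← smul_add]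
  exact A.smul_mem (h d hd) _

theorem MvPolynomial.C_mul_mul_C_inv_mul {K σ : Type*} [Field K] {a : K} (ha : a ≠ 0)
    (x y : MvPolynomial σ K) : C a * x * (C a⁻¹ * y) = x * y := by
  rw [mul_mul_mul_comm, ← C_mul, mul_inv_cancel₀ ha, C_1, one_mul]

theorem stmt6_general (n : ℕ) (ζ : ℂ) (hζ : IsPrimitiveRoot ζ (n + 1))
    (σ₁ σ₂ τ : MvPolynomial (Fin 4) ℂ →ₐ[ℂ] MvPolynomial (Fin 4) ℂ)
    (hσ₁ : σ₁ = MvPolynomial.aeval ![C ζ * X 0, C ζ⁻¹ * X 1, X 2, X 3])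
    (hσ₂ : σ₂ = MvPolynomial.aeval ![X 0, X 1, C ζ * X 2, C ζ⁻¹ * X 3])
    (hτ : τ = MvPolynomial.aeval ![X 2, X 3, X 0, X 1])
    (u₁ v₁ w₁ u₂ v₂ w₂ : MvPolynomial (Fin 4) ℂ)
    (hu₁ : u₁ = X 0 ^ (n + 1)) (hv₁ : v₁ = X 0 * X 1) (hw₁ : w₁ = X 1 ^ (n + 1))
    (hu₂ : u₂ = X 2 ^ (n + 1)) (hv₂ : v₂ = X 2 * X 3) (hw₂ : w₂ = X 3 ^ (n + 1)) :
    ∀ p : MvPolynomial (Fin 4) ℂ,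
      (σ₁ p = p ∧ σ₂ p = p ∧ τ p = p) ↔
        p ∈ Algebra.adjoin ℂ
          ({u₁ + u₂, v₁ + v₂, w₁ + w₂,
            (u₁ - u₂) ^ 2, (v₁ - v₂) ^ 2, (w₁ - w₂) ^ 2,
            (u₁ - u₂) * (v₁ - v₂), (u₁ - u₂) * (w₁ - w₂),
            (v₁ - v₂) * (w₁ - w₂)} : Set (MvPolynomial (Fin 4) ℂ)) := by
  subst hσ₁ hσ₂ hτ hu₁ hv₁ hw₁ hu₂ hv₂ hw₂
  have hk : n + 1 ≠ 0 := n.succ_ne_zero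
  have hζ₀ : ζ ≠ 0 := hζ.ne_zero hk
  intro p
  constructor
  · rintro ⟨h₁, h₂, h₃⟩
    refine Subalgebra.mem_of_add_map_mem _ _ h₃ (add_map_mem_of_forall_mem_support _ _ ?_)
    intro d hd
    refine add_map_mem_adjoin_swapGenerators _ ?_ ?_ ?_ ?_ ?_ ?_
      (monomial_mem_closure_of_modEq (modEq_zero_one_of_aeval_eq_self hζ hk h₁ hd)
        (modEq_two_three_of_aeval_eq_self hζ hk h₂ hd)) <;> simp
  · intro hp
    refine ⟨?_, ?_, ?_⟩
    · refine map_eq_self_of_mem_adjoin_swapGenerators_of_fixed _ ?_ ?_ ?_ ?_ ?_ ?_ hp <;>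
        simp [mul_pow, ← C_pow, hζ.pow_eq_one, C_mul_mul_C_inv_mul hζ₀]
    · refine map_eq_self_of_mem_adjoin_swapGenerators_of_fixed _ ?_ ?_ ?_ ?_ ?_ ?_ hp <;>
        simp [mul_pow, ← C_pow, hζ.pow_eq_one, C_mul_mul_C_inv_mul hζ₀]
    · refine map_eq_self_of_mem_adjoin_swapGenerators_of_swap _ ?_ ?_ ?_ ?_ ?_ ?_ hp <;> simp

/-- The wreath product `G = C_{n+1} ≀ S₂` acts on `ℂ[a₁,a₂,b₁,b₂]`
(variables `X 0, X 1, X 2, X 3`): the two copies of `C_{n+1}` act by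
`σ₁ : a₁ ↦ ζa₁, a₂ ↦ ζ⁻¹a₂` and `σ₂ : b₁ ↦ ζb₁, b₂ ↦ ζ⁻¹b₂`, and `S₂` acts by
`τ` swapping `aᵢ` with `bᵢ`.  A polynomial is `G`-invariant iff it is fixed by
these three generators.  The claim: the invariant ring is generated as a
ℂ-algebra by the nine elements `x₁,…,x₉` built from
`u₁ = a₁^{n+1}, v₁ = a₁a₂, w₁ = a₂^{n+1}, u₂ = b₁^{n+1}, v₂ = b₁b₂, w₂ = b₂^{n+1}`. -/
theorem stmt6 (n : ℕ) (hn : 1 ≤ n) (ζ : ℂ) (hζ : IsPrimitiveRoot ζ (n + 1))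
    (σ₁ σ₂ τ : MvPolynomial (Fin 4) ℂ →ₐ[ℂ] MvPolynomial (Fin 4) ℂ)
    (hσ₁ : σ₁ = MvPolynomial.aeval ![C ζ * X 0, C ζ⁻¹ * X 1, X 2, X 3])
    (hσ₂ : σ₂ = MvPolynomial.aeval ![X 0, X 1, C ζ * X 2, C ζ⁻¹ * X 3])
    (hτ : τ = MvPolynomial.aeval ![X 2, X 3, X 0, X 1])
    (u₁ v₁ w₁ u₂ v₂ w₂ : MvPolynomial (Fin 4) ℂ)
    (hu₁ : u₁ = X 0 ^ (n + 1)) (hv₁ : v₁ = X 0 * X 1) (hw₁ : w₁ = X 1 ^ (n + 1))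
    (hu₂ : u₂ = X 2 ^ (n + 1)) (hv₂ : v₂ = X 2 * X 3) (hw₂ : w₂ = X 3 ^ (n + 1)) :
    ∀ p : MvPolynomial (Fin 4) ℂ,
      (σ₁ p = p ∧ σ₂ p = p ∧ τ p = p) ↔
        p ∈ Algebra.adjoin ℂ
          ({u₁ + u₂, v₁ + v₂, w₁ + w₂,
            (u₁ - u₂) ^ 2, (v₁ - v₂) ^ 2, (w₁ - w₂) ^ 2,
            (u₁ - u₂) * (v₁ - v₂), (u₁ - u₂) * (w₁ - w₂),
            (v₁ - v₂) * (w₁ - w₂)} : Set (MvPolynomial (Fin 4) ℂ)) :=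
  stmt6_general n ζ hζ σ₁ σ₂ τ hσ₁ hσ₂ hτ u₁ v₁ w₁ u₂ v₂ w₂ hu₁ hv₁ hw₁ hu₂ hv₂ hw₂
end

section
/- Let Y₁, Y₂ be schemes with closed subschemes Vᵢ, Wᵢ ⊂ Yᵢ (i = 1,2) defined by ideal sheaves I_i and J_i. Suppose given isomorphisms of formal completions φ_V : (Ŷ₁)_{V₁} → (Ŷ₂)_{V₂} and φ_W : (Ŷ₁)_{W₁} → (Ŷ₂)_{W₂} whose restrictions to the completions along V₁ ∩ W₁ (defined by I₁ + J₁) agree. If in each Yᵢ, for every m there exists n with (Iᵢ ∩ Jᵢ)^m ⊇ Iᵢⁿ ∩ Jᵢⁿ and Iᵢⁿ + Jᵢⁿ ⊇ (Iᵢ + Jᵢ)^k for k ≫ n, then there is an isomorphism of the formal completions along V₁ ∪ W₁ (defined by I₁ ∩ J₁) and V₂ ∪ W₂ restricting to φ_V and φ_W. -/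
/-!
Since `(I₂ + J₂)ᵏ ⊆ I₂ⁿ + J₂ⁿ` for `k ≫ n`, the maps `A₁ → A₂ ⧸ I₂ⁿ` and `A₁ → A₂ ⧸ J₂ⁿ`
induced by `φV` and `φW` agree modulo `I₂ⁿ + J₂ⁿ`; as `A₂ ⧸ (I₂ⁿ ⊓ J₂ⁿ)` is the fibre product of
`A₂ ⧸ I₂ⁿ` and `A₂ ⧸ J₂ⁿ` over `A₂ ⧸ (I₂ⁿ + J₂ⁿ)`, they glue to a compatible family of maps
`A₁ → A₂ ⧸ (I₂ⁿ ⊓ J₂ⁿ)`. The filtrations `I₂ⁿ ⊓ J₂ⁿ` and `(I₂ ⊓ J₂)ⁿ` are cofinal in each other,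
so this family induces one into `A₂ ⧸ (I₂ ⊓ J₂)ⁿ`, which kills `(I₁ ⊓ J₁)ⁿ` because at level one
it kills `I₁ ⊓ J₁`. The same construction applied to the inverses gives maps back, and both
composites are the identity since, by cofinality again, a compatible family into `A ⧸ (I ⊓ J)ⁿ`
is determined by its reductions modulo `Iⁿ` and `Jⁿ`.
-/

theorem RingEquiv.comp_symm_eq_symm_comp {A B C D : Type*} [NonAssocSemiring A]
    [NonAssocSemiring B] [NonAssocSemiring C] [NonAssocSemiring D] {e₁ : A ≃+* B} {e₂ : C ≃+* D}
    {f : A →+* C} {g : B →+* D} (h : g.comp e₁.toRingHom = e₂.toRingHom.comp f) :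
    f.comp e₁.symm.toRingHom = e₂.symm.toRingHom.comp g := by
  ext x
  simpa using congrArg e₂.symm (RingHom.congr_fun h (e₁.symm x)).symm

theorem RingEquiv.comp_comp_eq_of_comp_eq {X Y A B : Type*} [NonAssocSemiring X]
    [NonAssocSemiring Y] [NonAssocSemiring A] [NonAssocSemiring B] (e : A ≃+* B)
    {p : X →+* A} {q : Y →+* B} {f : X →+* Y} {g : Y →+* X}
    (hf : e.toRingHom.comp p = q.comp f) (hg : e.symm.toRingHom.comp q = p.comp g) :
    p.comp (g.comp f) = p := by
  rw [← RingHom.comp_assoc, ← hg, RingHom.comp_assoc, ← hf, ← RingHom.comp_assoc]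
  ext x
  simp

theorem Antitone.exists_le_and_le_of_cofinal {α : Type*} [Preorder α] {K L : ℕ → α}
    (hK : Antitone K) (hKL : ∀ m, ∃ n, K n ≤ L m) (m : ℕ) : ∃ n, m ≤ n ∧ K n ≤ L m := by
  obtain ⟨n, hn⟩ := hKL m
  exact ⟨max n m, le_max_right n m, (hK (le_max_left n m)).trans hn⟩

namespace Ideal

variable {S : Type*} [CommRing S]

theorem antitone_pow (I : Ideal S) : Antitone (I ^ ·) := fun _ _ h => pow_le_pow_right h

theorem antitone_pow_inf_pow (I J : Ideal S) : Antitone fun n => I ^ n ⊓ J ^ n :=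
  fun _ _ h => inf_le_inf (pow_le_pow_right h) (pow_le_pow_right h)

theorem inf_pow_le_pow_inf_pow (I J : Ideal S) (n : ℕ) : (I ⊓ J) ^ n ≤ I ^ n ⊓ J ^ n :=
  le_inf (pow_right_mono inf_le_left n) (pow_right_mono inf_le_right n)

end Ideal

namespace Ideal.Quotient

variable {R S : Type*} [CommRing R] [CommRing S]

def IsCompatible {K : ℕ → Ideal S} (hK : Antitone K) (F : ∀ n, R →+* S ⧸ K n) : Prop :=
  ∀ ⦃m n : ℕ⦄ (h : m ≤ n), (factor (hK h)).comp (F n) = F m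

theorem isCompatible_of_succ {K : ℕ → Ideal S} (hK : Antitone K) {F : ∀ n, R →+* S ⧸ K n}
    (hF : ∀ n, (factor (hK n.le_succ)).comp (F (n + 1)) = F n) : IsCompatible hK F := by
  intro m n h
  induction n, h using Nat.le_induction with
  | base => rw [factor_eq, RingHom.id_comp]
  | succ n hmn ih => rw [← ih, ← hF n, ← RingHom.comp_assoc, factor_comp]

section Cofinal

variable {K L : ℕ → Ideal S}

theorem IsCompatible.factor_comp_eq {hK : Antitone K} {F : ∀ n, R →+* S ⧸ K n}
    (hF : IsCompatible hK F) {M : Ideal S} {n n' : ℕ} (hn : K n ≤ M) (hn' : K n' ≤ M) :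
    (factor hn).comp (F n) = (factor hn').comp (F n') := by
  have key : ∀ {n n'} (h : n ≤ n') (hn : K n ≤ M),
      (factor hn).comp (F n) = (factor ((hK h).trans hn)).comp (F n') := fun h hn => by
    rw [← hF h, ← RingHom.comp_assoc, factor_comp]
  rw [key (le_max_left n n') hn, key (le_max_right n n') hn']

theorem IsCompatible.exists_of_cofinal {hK : Antitone K} (hL : Antitone L)
    (hKL : ∀ m, ∃ n, K n ≤ L m) (hLK : ∀ m, L m ≤ K m) {F : ∀ n, R →+* S ⧸ K n}
    (hF : IsCompatible hK F) :
    ∃ G : ∀ m, R →+* S ⧸ L m, IsCompatible hL G ∧ ∀ m, (factor (hLK m)).comp (G m) = F m := by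
  choose N hmN hN using hK.exists_le_and_le_of_cofinal hKL
  refine ⟨fun m => (factor (hN m)).comp (F (N m)), fun m n h => ?_, fun m => ?_⟩
  · rw [← RingHom.comp_assoc, factor_comp]
    exact hF.factor_comp_eq _ _
  · rw [← RingHom.comp_assoc, factor_comp]
    exact hF (hmN m)

theorem IsCompatible.ext_of_cofinal (hK : Antitone K) {hL : Antitone L}
    (hKL : ∀ m, ∃ n, K n ≤ L m) (hLK : ∀ m, L m ≤ K m) {G G' : ∀ m, R →+* S ⧸ L m}
    (hG : IsCompatible hL G) (hG' : IsCompatible hL G')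
    (h : ∀ m, (factor (hLK m)).comp (G m) = (factor (hLK m)).comp (G' m)) : G = G' := by
  funext m
  obtain ⟨n, hmn, hn⟩ := hK.exists_le_and_le_of_cofinal hKL m
  rw [← hG hmn, ← hG' hmn, ← factor_comp (hLK n) hn, RingHom.comp_assoc, RingHom.comp_assoc, h]

end Cofinal

section Glue

variable {P Q M : Ideal S}

theorem exists_mk_eq_mk_and_mk_eq_mk {x y : S} (h : mk (P + Q) x = mk (P + Q) y) :
    ∃ z, mk P z = mk P x ∧ mk Q z = mk Q y := by
  obtain ⟨p, hp, q, hq, hpq⟩ := Submodule.mem_sup.1 (Ideal.Quotient.eq.1 h)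
  refine ⟨x - p, Ideal.Quotient.eq.2 (by simpa using P.neg_mem hp), Ideal.Quotient.eq.2 ?_⟩
  rwa [show x - p - y = q by linear_combination -hpq]

theorem eq_of_factor_eq_of_factor_eq (hP : M ≤ P) (hQ : M ≤ Q) (hPQ : P ⊓ Q ≤ M)
    {x y : S ⧸ M} (hxyP : factor hP x = factor hP y) (hxyQ : factor hQ x = factor hQ y) :
    x = y := by
  obtain ⟨x, rfl⟩ := mk_surjective x
  obtain ⟨y, rfl⟩ := mk_surjective y
  simp only [factor_mk, Ideal.Quotient.eq] at hxyP hxyQ ⊢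
  exact hPQ ⟨hxyP, hxyQ⟩

theorem ringHom_ext_of_inf_le (hP : M ≤ P) (hQ : M ≤ Q) (hPQ : P ⊓ Q ≤ M)
    {H H' : R →+* S ⧸ M} (hHP : (factor hP).comp H = (factor hP).comp H')
    (hHQ : (factor hQ).comp H = (factor hQ).comp H') : H = H' :=
  RingHom.ext fun a =>
    eq_of_factor_eq_of_factor_eq hP hQ hPQ (RingHom.congr_fun hHP a) (RingHom.congr_fun hHQ a)

theorem exists_factor_comp_eq_and_factor_comp_eq (F : R →+* S ⧸ P) (G : R →+* S ⧸ Q)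
    (hFG : ∀ a, ∃ z, mk P z = F a ∧ mk Q z = G a) :
    ∃ H : R →+* S ⧸ (P ⊓ Q),
      (factor inf_le_left).comp H = F ∧ (factor inf_le_right).comp H = G := by
  -- `ι` is injective, so `F.prod G`, which lands in its range, can be read back through it.
  set ι := (factor (inf_le_left : P ⊓ Q ≤ P)).prod (factor inf_le_right)
  have hι : Function.Injective ι.rangeRestrict := fun x y hxy =>
    have hxy : ι x = ι y := congrArg Subtype.val hxy
    eq_of_factor_eq_of_factor_eq _ _ le_rfl (congrArg Prod.fst hxy) (congrArg Prod.snd hxy)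
  have hrange : ∀ a, F.prod G a ∈ ι.range := fun a => by
    obtain ⟨z, hzP, hzQ⟩ := hFG a
    exact ⟨mk _ z, by simp [ι, hzP, hzQ]⟩
  let e := RingEquiv.ofBijective ι.rangeRestrict ⟨hι, ι.rangeRestrict_surjective⟩
  have hιH : ι.comp (e.symm.toRingHom.comp ((F.prod G).codRestrict ι.range hrange)) = F.prod G :=
    RingHom.ext fun a => congrArg Subtype.val (e.apply_symm_apply ⟨_, hrange a⟩)
  exact ⟨_, congrArg (RingHom.fst _ _).comp hιH, congrArg (RingHom.snd _ _).comp hιH⟩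

end Glue

section Pow

variable {I J : Ideal S}

theorem exists_isCompatible_pow_inf_pow {FV : ∀ n, R →+* S ⧸ I ^ n} {FW : ∀ n, R →+* S ⧸ J ^ n}
    (hFV : IsCompatible (antitone_pow I) FV) (hFW : IsCompatible (antitone_pow J) FW)
    (hFVW : ∀ n, (factor (pow_right_mono le_sup_left n)).comp (FV n) =
      (factor (pow_right_mono le_sup_right n)).comp (FW n))
    (hk : ∀ n, ∃ k₀, ∀ k, k₀ ≤ k → (I + J) ^ k ≤ I ^ n + J ^ n) :
    ∃ H : ∀ n, R →+* S ⧸ (I ^ n ⊓ J ^ n), IsCompatible (antitone_pow_inf_pow I J) H ∧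
      ∀ n, (factor inf_le_left).comp (H n) = FV n ∧ (factor inf_le_right).comp (H n) = FW n := by
  have hglue : ∀ n a, ∃ z, mk (I ^ n) z = FV n a ∧ mk (J ^ n) z = FW n a := by
    intro n a
    obtain ⟨k₀, hk₀⟩ := hk n
    let k := max k₀ n
    obtain ⟨u, hu⟩ := mk_surjective (FV k a)
    obtain ⟨v, hv⟩ := mk_surjective (FW k a)
    have huv : mk ((I + J) ^ k) u = mk ((I + J) ^ k) v := by
      simpa [← hu, ← hv] using RingHom.congr_fun (hFVW k) a
    have huv' := congrArg (factor (hk₀ k (le_max_left k₀ n))) huv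
    rw [factor_mk, factor_mk] at huv'
    obtain ⟨z, hzu, hzv⟩ := exists_mk_eq_mk_and_mk_eq_mk huv'
    refine ⟨z, hzu.trans ?_, hzv.trans ?_⟩
    · rw [← factor_mk (pow_le_pow_right (le_max_right k₀ n)) u, hu]
      exact RingHom.congr_fun (hFV (le_max_right k₀ n)) a
    · rw [← factor_mk (pow_le_pow_right (le_max_right k₀ n)) v, hv]
      exact RingHom.congr_fun (hFW (le_max_right k₀ n)) a
  choose H hH using fun n => exists_factor_comp_eq_and_factor_comp_eq (FV n) (FW n) (hglue n)
  refine ⟨H, fun m n h => ringHom_ext_of_inf_le inf_le_left inf_le_right le_rfl ?_ ?_, hH⟩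
  · rw [(hH m).1, ← RingHom.comp_assoc, factor_comp, ← hFV h, ← (hH n).1, ← RingHom.comp_assoc,
      factor_comp]
  · rw [(hH m).2, ← RingHom.comp_assoc, factor_comp, ← hFW h, ← (hH n).2, ← RingHom.comp_assoc,
      factor_comp]

theorem exists_isCompatible_inf_pow {FV : ∀ n, R →+* S ⧸ I ^ n} {FW : ∀ n, R →+* S ⧸ J ^ n}
    (hFV : IsCompatible (antitone_pow I) FV) (hFW : IsCompatible (antitone_pow J) FW)
    (hFVW : ∀ n, (factor (pow_right_mono le_sup_left n)).comp (FV n) =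
      (factor (pow_right_mono le_sup_right n)).comp (FW n))
    (hc : ∀ m, ∃ n, I ^ n ⊓ J ^ n ≤ (I ⊓ J) ^ m)
    (hk : ∀ n, ∃ k₀, ∀ k, k₀ ≤ k → (I + J) ^ k ≤ I ^ n + J ^ n) :
    ∃ Ψ : ∀ m, R →+* S ⧸ (I ⊓ J) ^ m, IsCompatible (antitone_pow (I ⊓ J)) Ψ ∧
      ∀ m, (factor (pow_right_mono inf_le_left m)).comp (Ψ m) = FV m ∧
        (factor (pow_right_mono inf_le_right m)).comp (Ψ m) = FW m := by
  obtain ⟨H, hH, hHVW⟩ := exists_isCompatible_pow_inf_pow hFV hFW hFVW hk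
  obtain ⟨Ψ, hΨ, hΨH⟩ := hH.exists_of_cofinal (antitone_pow _) hc (inf_pow_le_pow_inf_pow I J)
  refine ⟨Ψ, hΨ, fun m => ⟨?_, ?_⟩⟩
  · rw [← (hHVW m).1, ← hΨH m, ← RingHom.comp_assoc, factor_comp]
  · rw [← (hHVW m).2, ← hΨH m, ← RingHom.comp_assoc, factor_comp]

theorem IsCompatible.pow_le_ker {M : Ideal S} {Ψ : ∀ m, R →+* S ⧸ M ^ m}
    (hΨ : IsCompatible (antitone_pow M) Ψ) {N : Ideal R} (hN : N ≤ RingHom.ker (Ψ 1)) (m : ℕ) :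
    N ^ m ≤ RingHom.ker (Ψ m) := by
  rcases m with _ | m
  · have := Ideal.Quotient.subsingleton_iff.2 ((pow_zero M).trans Ideal.one_eq_top)
    exact fun a _ => Subsingleton.elim _ _
  have hmap : N.map (Ψ (m + 1)) ≤ M.map (mk (M ^ (m + 1))) := by
    rw [Ideal.map_le_iff_le_comap]
    intro a ha
    have : Ψ (m + 1) a ∈ RingHom.ker (factor (pow_le_pow_right (Nat.le_add_left 1 m) :
        M ^ (m + 1) ≤ M ^ 1)) := by
      rw [RingHom.mem_ker, ← RingHom.comp_apply, hΨ (Nat.le_add_left 1 m)]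
      exact hN ha
    rwa [factor_ker, pow_one] at this
  rw [RingHom.ker_eq_comap_bot, ← Ideal.map_le_iff_le_comap, Ideal.map_pow]
  calc N.map (Ψ (m + 1)) ^ (m + 1) ≤ M.map (mk (M ^ (m + 1))) ^ (m + 1) := pow_right_mono hmap _
    _ = ⊥ := by rw [← Ideal.map_pow, map_quotient_self]

end Pow

section Tower

variable {T : Type*} [CommRing T]

def IsTowerHom {K' : ℕ → Ideal R} {K : ℕ → Ideal S} (hK' : Antitone K') (hK : Antitone K)
    (f : ∀ n, R ⧸ K' n →+* S ⧸ K n) : Prop :=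
  ∀ n, (factor (hK n.le_succ)).comp (f (n + 1)) = (f n).comp (factor (hK' n.le_succ))

variable {K' : ℕ → Ideal R} {K : ℕ → Ideal S} {hK' : Antitone K'} {hK : Antitone K}

theorem IsTowerHom.isCompatible {f : ∀ n, R ⧸ K' n →+* S ⧸ K n} (hf : IsTowerHom hK' hK f) :
    IsCompatible hK fun n => (f n).comp (mk (K' n)) :=
  isCompatible_of_succ hK fun n => by
    rw [← RingHom.comp_assoc, hf n, RingHom.comp_assoc, factor_comp_mk]

theorem IsTowerHom.symm {e : ∀ n, R ⧸ K' n ≃+* S ⧸ K n}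
    (he : IsTowerHom hK' hK fun n => (e n).toRingHom) :
    IsTowerHom hK hK' fun n => (e n).symm.toRingHom :=
  fun n => RingEquiv.comp_symm_eq_symm_comp (he n)

theorem IsTowerHom.comp {K'' : ℕ → Ideal T} {hK'' : Antitone K''}
    {f : ∀ n, R ⧸ K' n →+* S ⧸ K n} {g : ∀ n, S ⧸ K n →+* T ⧸ K'' n}
    (hg : IsTowerHom hK hK'' g) (hf : IsTowerHom hK' hK f) :
    IsTowerHom hK' hK'' fun n => (g n).comp (f n) := fun n => by
  rw [← RingHom.comp_assoc, hg n, RingHom.comp_assoc, hf n, RingHom.comp_assoc]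

theorem isTowerHom_id : IsTowerHom hK hK fun n => RingHom.id (S ⧸ K n) :=
  fun n => by rw [RingHom.comp_id, RingHom.id_comp]

variable {I' J' : Ideal R} {I J : Ideal S}

theorem exists_isTowerHom_inf_pow {fV : ∀ n, R ⧸ I' ^ n →+* S ⧸ I ^ n}
    {fW : ∀ n, R ⧸ J' ^ n →+* S ⧸ J ^ n} (hfV : IsTowerHom (antitone_pow I') (antitone_pow I) fV)
    (hfW : IsTowerHom (antitone_pow J') (antitone_pow J) fW)
    (f : ∀ n, R ⧸ (I' + J') ^ n →+* S ⧸ (I + J) ^ n)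
    (hfVf : ∀ n, (factor (pow_right_mono le_sup_left n)).comp (fV n) =
      (f n).comp (factor (pow_right_mono le_sup_left n)))
    (hfWf : ∀ n, (factor (pow_right_mono le_sup_right n)).comp (fW n) =
      (f n).comp (factor (pow_right_mono le_sup_right n)))
    (hc : ∀ m, ∃ n, I ^ n ⊓ J ^ n ≤ (I ⊓ J) ^ m)
    (hk : ∀ n, ∃ k₀, ∀ k, k₀ ≤ k → (I + J) ^ k ≤ I ^ n + J ^ n) :
    ∃ ψ : ∀ n, R ⧸ (I' ⊓ J') ^ n →+* S ⧸ (I ⊓ J) ^ n,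
      IsTowerHom (antitone_pow _) (antitone_pow _) ψ ∧
      (∀ n, (fV n).comp (factor (pow_right_mono inf_le_left n)) =
        (factor (pow_right_mono inf_le_left n)).comp (ψ n)) ∧
      (∀ n, (fW n).comp (factor (pow_right_mono inf_le_right n)) =
        (factor (pow_right_mono inf_le_right n)).comp (ψ n)) := by
  have hFVW : ∀ n, (factor (pow_right_mono le_sup_left n)).comp ((fV n).comp (mk _)) =
      (factor (pow_right_mono le_sup_right n)).comp ((fW n).comp (mk _)) := fun n => by
    rw [← RingHom.comp_assoc, hfVf, ← RingHom.comp_assoc, hfWf, RingHom.comp_assoc,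
      RingHom.comp_assoc, factor_comp_mk, factor_comp_mk]
  obtain ⟨Ψ, hΨ, hΨVW⟩ :=
    exists_isCompatible_inf_pow hfV.isCompatible hfW.isCompatible hFVW hc hk
  have hker : I' ⊓ J' ≤ RingHom.ker (Ψ 1) := fun a ha => by
    rw [RingHom.mem_ker]
    refine eq_of_factor_eq_of_factor_eq (pow_right_mono inf_le_left 1)
      (pow_right_mono inf_le_right 1) (by simp only [pow_one, le_rfl]) ?_ ?_
    · rw [← RingHom.comp_apply, (hΨVW 1).1, map_zero, RingHom.comp_apply,
        eq_zero_iff_mem.2 (by simpa using ha.1), map_zero]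
    · rw [← RingHom.comp_apply, (hΨVW 1).2, map_zero, RingHom.comp_apply,
        eq_zero_iff_mem.2 (by simpa using ha.2), map_zero]
  let ψ n : R ⧸ (I' ⊓ J') ^ n →+* S ⧸ (I ⊓ J) ^ n := lift _ (Ψ n) (hΨ.pow_le_ker hker n)
  have hψ n : (ψ n).comp (mk _) = Ψ n := lift_comp_mk _ _ _
  refine ⟨ψ, fun n => ringHom_ext ?_, fun n => ringHom_ext ?_, fun n => ringHom_ext ?_⟩
  · rw [RingHom.comp_assoc, hψ, RingHom.comp_assoc, factor_comp_mk, hψ]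
    exact hΨ n.le_succ
  · rw [RingHom.comp_assoc, RingHom.comp_assoc, hψ, factor_comp_mk, (hΨVW n).1]
  · rw [RingHom.comp_assoc, RingHom.comp_assoc, hψ, factor_comp_mk, (hΨVW n).2]

theorem IsTowerHom.ext_inf_pow (hc : ∀ m, ∃ n, I ^ n ⊓ J ^ n ≤ (I ⊓ J) ^ m)
    {ψ ψ' : ∀ n, R ⧸ (I' ⊓ J') ^ n →+* S ⧸ (I ⊓ J) ^ n}
    (hψ : IsTowerHom (antitone_pow _) (antitone_pow _) ψ)
    (hψ' : IsTowerHom (antitone_pow _) (antitone_pow _) ψ')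
    (hV : ∀ n, (factor (pow_right_mono inf_le_left n)).comp (ψ n) =
      (factor (pow_right_mono inf_le_left n)).comp (ψ' n))
    (hW : ∀ n, (factor (pow_right_mono inf_le_right n)).comp (ψ n) =
      (factor (pow_right_mono inf_le_right n)).comp (ψ' n)) :
    ψ = ψ' := by
  suffices (fun n => (ψ n).comp (mk _)) = fun n => (ψ' n).comp (mk _) from
    funext fun n => ringHom_ext (congr_fun this n)
  refine hψ.isCompatible.ext_of_cofinal (antitone_pow_inf_pow I J) hc
    (inf_pow_le_pow_inf_pow I J) hψ'.isCompatible fun m =>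
      ringHom_ext_of_inf_le inf_le_left inf_le_right le_rfl ?_ ?_ <;>
    simp only [← RingHom.comp_assoc, factor_comp, hV, hW]

end Tower

end Ideal.Quotient

/-- Formal completions of a scheme along closed subschemes `V`, `W`, `V ∩ W`,
`V ∪ W` (defined by ideals `I`, `J`, `I + J`, `I ∩ J`) are encoded by the towers
of quotients `A ⧸ Iⁿ`, `A ⧸ Jⁿ`, `A ⧸ (I+J)ⁿ`, `A ⧸ (I⊓J)ⁿ`.  Suppose given
compatible towers of isomorphisms `φV : A₁⧸I₁ⁿ ≅ A₂⧸I₂ⁿ` and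
`φW : A₁⧸J₁ⁿ ≅ A₂⧸J₂ⁿ` whose restrictions to the completions along `V ∩ W`
agree (i.e. both are compatible with one tower `φ : A₁⧸(I₁+J₁)ⁿ ≅ A₂⧸(I₂+J₂)ⁿ`).
If moreover in each ring, for every `m` there is `n` with `Iⁿ ⊓ Jⁿ ⊆ (I⊓J)^m`,
and for every `n` one has `(I+J)^k ⊆ Iⁿ + Jⁿ` for `k ≫ n`, then there is a tower
of isomorphisms `ψ : A₁⧸(I₁⊓J₁)ⁿ ≅ A₂⧸(I₂⊓J₂)ⁿ` (an isomorphism of the formal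
completions along `V ∪ W`) restricting to `φV` and `φW`. -/
theorem stmt12 (A₁ A₂ : Type*) [CommRing A₁] [CommRing A₂]
    (I₁ J₁ : Ideal A₁) (I₂ J₂ : Ideal A₂)
    (φV : ∀ n : ℕ, (A₁ ⧸ I₁ ^ n) ≃+* (A₂ ⧸ I₂ ^ n))
    (φW : ∀ n : ℕ, (A₁ ⧸ J₁ ^ n) ≃+* (A₂ ⧸ J₂ ^ n))
    (hVtower : ∀ n : ℕ,
      (Ideal.Quotient.factor (S := I₂ ^ (n + 1)) (T := I₂ ^ n)
          (Ideal.pow_le_pow_right (Nat.le_succ n))).comp (φV (n + 1)).toRingHom =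
        (φV n).toRingHom.comp
          (Ideal.Quotient.factor (S := I₁ ^ (n + 1)) (T := I₁ ^ n)
            (Ideal.pow_le_pow_right (Nat.le_succ n))))
    (hWtower : ∀ n : ℕ,
      (Ideal.Quotient.factor (S := J₂ ^ (n + 1)) (T := J₂ ^ n)
          (Ideal.pow_le_pow_right (Nat.le_succ n))).comp (φW (n + 1)).toRingHom =
        (φW n).toRingHom.comp
          (Ideal.Quotient.factor (S := J₁ ^ (n + 1)) (T := J₁ ^ n)
            (Ideal.pow_le_pow_right (Nat.le_succ n))))
    (hAgree : ∃ φ : ∀ n : ℕ, (A₁ ⧸ (I₁ + J₁) ^ n) ≃+* (A₂ ⧸ (I₂ + J₂) ^ n),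
      ∀ n : ℕ,
        (Ideal.Quotient.factor (S := I₂ ^ n) (T := (I₂ + J₂) ^ n)
            (Ideal.pow_right_mono le_sup_left n)).comp (φV n).toRingHom =
          (φ n).toRingHom.comp
            (Ideal.Quotient.factor (S := I₁ ^ n) (T := (I₁ + J₁) ^ n)
              (Ideal.pow_right_mono le_sup_left n)) ∧
        (Ideal.Quotient.factor (S := J₂ ^ n) (T := (I₂ + J₂) ^ n)
            (Ideal.pow_right_mono le_sup_right n)).comp (φW n).toRingHom =
          (φ n).toRingHom.comp
            (Ideal.Quotient.factor (S := J₁ ^ n) (T := (I₁ + J₁) ^ n)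
              (Ideal.pow_right_mono le_sup_right n)))
    (hc₁ : ∀ m : ℕ, ∃ n : ℕ, I₁ ^ n ⊓ J₁ ^ n ≤ (I₁ ⊓ J₁) ^ m)
    (hc₂ : ∀ m : ℕ, ∃ n : ℕ, I₂ ^ n ⊓ J₂ ^ n ≤ (I₂ ⊓ J₂) ^ m)
    (hk₁ : ∀ n : ℕ, ∃ k₀ : ℕ, ∀ k : ℕ, k₀ ≤ k → (I₁ + J₁) ^ k ≤ I₁ ^ n + J₁ ^ n)
    (hk₂ : ∀ n : ℕ, ∃ k₀ : ℕ, ∀ k : ℕ, k₀ ≤ k → (I₂ + J₂) ^ k ≤ I₂ ^ n + J₂ ^ n) :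
    ∃ ψ : ∀ n : ℕ, (A₁ ⧸ (I₁ ⊓ J₁) ^ n) ≃+* (A₂ ⧸ (I₂ ⊓ J₂) ^ n),
      (∀ n : ℕ,
        (Ideal.Quotient.factor (S := (I₂ ⊓ J₂) ^ (n + 1)) (T := (I₂ ⊓ J₂) ^ n)
            (Ideal.pow_le_pow_right (Nat.le_succ n))).comp (ψ (n + 1)).toRingHom =
          (ψ n).toRingHom.comp
            (Ideal.Quotient.factor (S := (I₁ ⊓ J₁) ^ (n + 1)) (T := (I₁ ⊓ J₁) ^ n)
              (Ideal.pow_le_pow_right (Nat.le_succ n)))) ∧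
      (∀ n : ℕ,
        (φV n).toRingHom.comp
            (Ideal.Quotient.factor (S := (I₁ ⊓ J₁) ^ n) (T := I₁ ^ n)
              (Ideal.pow_right_mono inf_le_left n)) =
          (Ideal.Quotient.factor (S := (I₂ ⊓ J₂) ^ n) (T := I₂ ^ n)
              (Ideal.pow_right_mono inf_le_left n)).comp (ψ n).toRingHom) ∧
      (∀ n : ℕ,
        (φW n).toRingHom.comp
            (Ideal.Quotient.factor (S := (I₁ ⊓ J₁) ^ n) (T := J₁ ^ n)
              (Ideal.pow_right_mono inf_le_right n)) =
          (Ideal.Quotient.factor (S := (I₂ ⊓ J₂) ^ n) (T := J₂ ^ n)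
              (Ideal.pow_right_mono inf_le_right n)).comp (ψ n).toRingHom) := by
  obtain ⟨φ, hφ⟩ := hAgree
  obtain ⟨ψ, hψ, hψV, hψW⟩ := Ideal.Quotient.exists_isTowerHom_inf_pow
    (fV := fun n => (φV n).toRingHom) (fW := fun n => (φW n).toRingHom) hVtower hWtower
    (fun n => (φ n).toRingHom) (fun n => (hφ n).1) (fun n => (hφ n).2) hc₂ hk₂
  obtain ⟨ψ', hψ', hψ'V, hψ'W⟩ := Ideal.Quotient.exists_isTowerHom_inf_pow
    (fV := fun n => (φV n).symm.toRingHom) (fW := fun n => (φW n).symm.toRingHom)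
    (Ideal.Quotient.IsTowerHom.symm hVtower) (Ideal.Quotient.IsTowerHom.symm hWtower)
    (fun n => (φ n).symm.toRingHom) (fun n => RingEquiv.comp_symm_eq_symm_comp (hφ n).1)
    (fun n => RingEquiv.comp_symm_eq_symm_comp (hφ n).2) hc₁ hk₁
  have hψ'ψ := (hψ'.comp hψ).ext_inf_pow hc₁ Ideal.Quotient.isTowerHom_id
    (fun n => (φV n).comp_comp_eq_of_comp_eq (hψV n) (hψ'V n))
    (fun n => (φW n).comp_comp_eq_of_comp_eq (hψW n) (hψ'W n))
  have hψψ' := (hψ.comp hψ').ext_inf_pow hc₂ Ideal.Quotient.isTowerHom_id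
    (fun n => (φV n).symm.comp_comp_eq_of_comp_eq (hψ'V n) (hψV n))
    (fun n => (φW n).symm.comp_comp_eq_of_comp_eq (hψ'W n) (hψW n))
  exact ⟨fun n => RingEquiv.ofRingHom (ψ n) (ψ' n) (congr_fun hψψ' n) (congr_fun hψ'ψ n),
    hψ, hψV, hψW⟩
end

section
/- In a Noetherian commutative ring, for ideals I and J and any m ∈ ℕ, there exists n ∈ ℕ such that Iⁿ ∩ Jⁿ ⊆ (I ∩ J)^m. -/
/-!
By Artin–Rees applied to the submodule `J ^ m` of `A`, some `I ^ n ⊓ J ^ m` lies in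
`I ^ m * J ^ m = (I * J) ^ m`, which is contained in `(I ⊓ J) ^ m`.
-/

theorem Ideal.exists_pow_smul_top_inf_le_pow_smul {R M : Type*} [CommRing R] [AddCommGroup M]
    [Module R M] [IsNoetherianRing R] [Module.Finite R M] (I : Ideal R) (N : Submodule R M)
    (m : ℕ) : ∃ n : ℕ, I ^ n • (⊤ : Submodule R M) ⊓ N ≤ I ^ m • N := by
  obtain ⟨k, hk⟩ := I.exists_pow_inf_eq_pow_smul N
  refine ⟨m + k, ?_⟩
  rw [hk (m + k) le_add_self, Nat.add_sub_cancel]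
  exact smul_mono_right _ inf_le_right

/-- In a Noetherian commutative ring, for ideals `I`, `J` and any `m`, there exists
`n` with `Iⁿ ⊓ Jⁿ ⊆ (I ⊓ J)^m`. -/
theorem stmt13 {A : Type*} [CommRing A] [IsNoetherianRing A] (I J : Ideal A) (m : ℕ) :
    ∃ n : ℕ, I ^ n ⊓ J ^ n ≤ (I ⊓ J) ^ m := by
  obtain ⟨n, hn⟩ := I.exists_pow_smul_top_inf_le_pow_smul (J ^ m) m
  refine ⟨max n m, ?_⟩
  calc I ^ max n m ⊓ J ^ max n m ≤ I ^ n ⊓ J ^ m :=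
        inf_le_inf (Ideal.pow_le_pow_right (le_max_left n m))
          (Ideal.pow_le_pow_right (le_max_right n m))
    _ ≤ I ^ m * J ^ m := by simpa only [Ideal.smul_eq_mul, Ideal.mul_top] using hn
    _ = (I * J) ^ m := (mul_pow I J m).symm
    _ ≤ (I ⊓ J) ^ m := Ideal.pow_right_mono Ideal.mul_le_inf m
end

section
/- Let V = ℙ¹ × ℙ¹ with affine coordinates x, y on ℂ × ℂ ⊂ V. The ℂ-algebra of global sections of the completion of the cotangent bundle T*_V along the zero section, viewed inside ℂ[x,y][[∂_x,∂_y]], is topologically generated by the six elements ∂_x, x∂_x, x²∂_x, ∂_y, y∂_y, y²∂_y. -/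
open MvPolynomial

noncomputable section

/-- The coefficient ring `ℂ[x,y]` (with `x = X 0`, `y = X 1`). -/
abbrev PolyXY : Type := MvPolynomial (Fin 2) ℂ

/-- The ring `ℂ[x,y][[∂_x,∂_y]]` of functions on the completion of the total
space of `T*(ℂ×ℂ)` along the zero section: formal power series in the fiber
coordinates `∂_x, ∂_y` with polynomial coefficients. -/
abbrev CotRing : Type := MvPowerSeries (Fin 2) PolyXY

/-- The function `∂_x` (resp. `∂_y` for index 1) on the cotangent bundle. -/
def del (i : Fin 2) : CotRing :=
  MvPowerSeries.monomial (Finsupp.single i 1) 1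

/-- Multiplication of the fiber coordinate `∂_i` by a base function `p`. -/
def mul_del (i : Fin 2) (p : PolyXY) : CotRing :=
  MvPowerSeries.monomial (Finsupp.single i 1) p

/-- A series `F = ∑_{m,n} f_{m,n}(x,y) ∂_x^m ∂_y^n` is the restriction to this
chart of a global function on the completion of `T*(ℙ¹×ℙ¹)` along the zero
section iff each coefficient satisfies `deg_x f_{m,n} ≤ 2m` and
`deg_y f_{m,n} ≤ 2n` (regularity in the other charts `x ↦ 1/x`, `y ↦ 1/y`,
under which `∂_x = −x'²∂_{x'}`, `∂_y = −y'²∂_{y'}`). -/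
def IsGlobal (F : CotRing) : Prop :=
  ∀ d : Fin 2 →₀ ℕ,
    MvPolynomial.degreeOf 0 (MvPowerSeries.coeff d F) ≤ 2 * d 0 ∧
    MvPolynomial.degreeOf 1 (MvPowerSeries.coeff d F) ≤ 2 * d 1

/-- The six global functions `∂_x, x∂_x, x²∂_x, ∂_y, y∂_y, y²∂_y`. -/
def sixGens : Set CotRing :=
  {del 0, mul_del 0 (X 0), mul_del 0 (X 0 ^ 2),
   del 1, mul_del 1 (X 1), mul_del 1 (X 1 ^ 2)}

/-!
The degree bounds defining global series (`deg_x ≤ 2m`, `deg_y ≤ 2n` on the coefficient of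
`∂_x^m ∂_y^n`) are additive along products, so global series form a subalgebra containing the
six generators. Conversely, a global monomial `c x^a y^b ∂_x^m ∂_y^n` is `c` times a product of
`m` generators `x^{a_k} ∂_x` and `n` generators `y^{b_k} ∂_y` with all `a_k, b_k ≤ 2`, so every
truncation of a global series lies in the algebra generated by the six.
-/

section DegreeBound

variable {σ τ R : Type*} [CommSemiring R]

def degreeOfCoeffLE (i : τ) (j : σ) (k : ℕ) :
    Subalgebra R (MvPowerSeries σ (MvPolynomial τ R)) where
  carrier := {F | ∀ d, degreeOf i (MvPowerSeries.coeff d F) ≤ k * d j}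
  add_mem' {a b} ha hb d := by
    rw [map_add]
    exact (degreeOf_add_le _ _ _).trans (max_le (ha d) (hb d))
  mul_mem' {a b} ha hb d := by
    classical
    rw [MvPowerSeries.coeff_mul]
    refine (degreeOf_sum_le _ _ _).trans (Finset.sup_le fun p hp => ?_)
    rw [Finset.HasAntidiagonal.mem_antidiagonal] at hp
    calc degreeOf i (MvPowerSeries.coeff p.1 a * MvPowerSeries.coeff p.2 b)
        _ ≤ degreeOf i (MvPowerSeries.coeff p.1 a) + degreeOf i (MvPowerSeries.coeff p.2 b) :=
          degreeOf_mul_le _ _ _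
        _ ≤ k * p.1 j + k * p.2 j := add_le_add (ha p.1) (hb p.2)
        _ = k * d j := by rw [← hp, Finsupp.add_apply, mul_add]
  algebraMap_mem' c d := by
    classical
    rw [MvPowerSeries.algebraMap_apply, MvPowerSeries.coeff_C]
    split_ifs <;> simp

end DegreeBound

def globalSubalgebra : Subalgebra ℂ CotRing := ⨅ i, degreeOfCoeffLE i i 2

theorem mem_globalSubalgebra {F : CotRing} : F ∈ globalSubalgebra ↔ IsGlobal F := by
  simp only [globalSubalgebra, Algebra.mem_iInf, Fin.forall_fin_two, IsGlobal, forall_and]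
  rfl

theorem isGlobal_monomial {e : Fin 2 →₀ ℕ} {p : PolyXY} (h0 : degreeOf 0 p ≤ 2 * e 0)
    (h1 : degreeOf 1 p ≤ 2 * e 1) : IsGlobal (MvPowerSeries.monomial e p) := by
  classical
  intro d
  rw [MvPowerSeries.coeff_monomial]
  split_ifs with h
  · exact h ▸ ⟨h0, h1⟩
  · simp

theorem mem_sixGens_iff {F : CotRing} :
    F ∈ sixGens ↔ ∃ i, ∃ a ≤ 2, F = MvPowerSeries.monomial (Finsupp.single i 1) (X i ^ a) := by
  constructor
  · rintro (rfl | rfl | rfl | rfl | rfl | rfl)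
    exacts [⟨0, 0, by norm_num, by simp [del]⟩, ⟨0, 1, by norm_num, by simp [mul_del]⟩,
      ⟨0, 2, le_rfl, rfl⟩, ⟨1, 0, by norm_num, by simp [del]⟩,
      ⟨1, 1, by norm_num, by simp [mul_del]⟩, ⟨1, 2, le_rfl, rfl⟩]
  · rintro ⟨i, a, ha, rfl⟩
    fin_cases i <;> interval_cases a <;> simp [sixGens, del, mul_del]

theorem sixGens_subset_globalSubalgebra : sixGens ⊆ globalSubalgebra := by
  intro F hF
  obtain ⟨i, a, ha, rfl⟩ := mem_sixGens_iff.mp hF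
  rw [SetLike.mem_coe, mem_globalSubalgebra]
  fin_cases i <;> apply isGlobal_monomial <;> simp [degreeOf_X_pow_of_ne, ha]

local notation "𝒜" => Algebra.adjoin ℂ sixGens

theorem monomial_single_X_pow_mem_adjoin (i : Fin 2) {n a : ℕ} (ha : a ≤ 2 * n) :
    MvPowerSeries.monomial (Finsupp.single i n) (X i ^ a : PolyXY) ∈ 𝒜 := by
  induction n generalizing a with
  | zero =>
    obtain rfl : a = 0 := by omega
    simp
  | succ n ih =>
    have hsplit : MvPowerSeries.monomial (Finsupp.single i (n + 1)) (X i ^ a : PolyXY) =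
        MvPowerSeries.monomial (Finsupp.single i 1) (X i ^ min a 2) *
          MvPowerSeries.monomial (Finsupp.single i n) (X i ^ (a - min a 2)) := by
      rw [MvPowerSeries.monomial_mul_monomial, ← pow_add, ← Finsupp.single_add,
        add_comm 1 n, Nat.add_sub_cancel' (min_le_left a 2)]
    rw [hsplit]
    exact mul_mem (Algebra.subset_adjoin (mem_sixGens_iff.mpr ⟨i, _, min_le_right a 2, rfl⟩))
      (ih (by omega))

theorem Finsupp.single_zero_add_single_one {M : Type*} [AddZeroClass M] (d : Fin 2 →₀ M) :
    single 0 (d 0) + single 1 (d 1) = d := by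
  ext i
  fin_cases i <;> simp

theorem monomial_monomial_eq_smul_mul (d u : Fin 2 →₀ ℕ) (c : ℂ) :
    (MvPowerSeries.monomial d (monomial u c) : CotRing) =
      c • (MvPowerSeries.monomial (Finsupp.single 0 (d 0)) (X 0 ^ u 0) *
        MvPowerSeries.monomial (Finsupp.single 1 (d 1)) (X 1 ^ u 1)) := by
  rw [MvPowerSeries.monomial_mul_monomial, X_pow_eq_monomial, X_pow_eq_monomial, monomial_mul,
    one_mul, Finsupp.single_zero_add_single_one, Finsupp.single_zero_add_single_one,
    ← LinearMap.map_smul_of_tower, smul_monomial, smul_eq_mul, mul_one]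

theorem monomial_mem_adjoin {d : Fin 2 →₀ ℕ} {f : PolyXY} (h0 : degreeOf 0 f ≤ 2 * d 0)
    (h1 : degreeOf 1 f ≤ 2 * d 1) : MvPowerSeries.monomial d f ∈ 𝒜 := by
  rw [f.as_sum, map_sum]
  refine Subalgebra.sum_mem _ fun u hu => ?_
  rw [monomial_monomial_eq_smul_mul]
  exact Subalgebra.smul_mem _ (mul_mem
    (monomial_single_X_pow_mem_adjoin 0 ((monomial_le_degreeOf 0 hu).trans h0))
    (monomial_single_X_pow_mem_adjoin 1 ((monomial_le_degreeOf 1 hu).trans h1))) _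

theorem coe_mem_adjoin_of_isGlobal {p : MvPolynomial (Fin 2) PolyXY} (hp : IsGlobal p) :
    (p : CotRing) ∈ 𝒜 := by
  rw [p.as_sum, ← coeToMvPowerSeries.ringHom_apply, map_sum]
  refine Subalgebra.sum_mem _ fun d _ => ?_
  rw [coeToMvPowerSeries.ringHom_apply, coe_monomial]
  simpa only [coeff_coe] using monomial_mem_adjoin (hp d).1 (hp d).2

theorem IsGlobal.trunc' {F : CotRing} (hF : IsGlobal F) (n : Fin 2 →₀ ℕ) :
    IsGlobal (MvPowerSeries.trunc' PolyXY n F : CotRing) := by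
  intro d
  rw [coeff_coe, MvPowerSeries.coeff_trunc']
  split_ifs
  · exact hF d
  · simp

/-- The ℂ-algebra of global sections of the completion of `T*_{ℙ¹×ℙ¹}` along the
zero section, viewed inside `ℂ[x,y][[∂_x,∂_y]]` as the subalgebra of global
series, is topologically generated by `∂_x, x∂_x, x²∂_x, ∂_y, y∂_y, y²∂_y`:
every element of the subalgebra ℂ-generated by these six is global, and every
global series agrees with an element of that subalgebra in each truncation
(density for the `(∂_x,∂_y)`-adic topology). -/
theorem stmt18 :
    (∀ P ∈ Algebra.adjoin ℂ sixGens, IsGlobal P) ∧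
    (∀ F : CotRing, IsGlobal F → ∀ N : ℕ,
      ∃ P ∈ Algebra.adjoin ℂ sixGens,
        ∀ d : Fin 2 →₀ ℕ, (d 0 + d 1 < N) →
          MvPowerSeries.coeff d F = MvPowerSeries.coeff d P) := by
  refine ⟨fun P hP => mem_globalSubalgebra.mp
    (Algebra.adjoin_le sixGens_subset_globalSubalgebra hP), fun F hF N => ?_⟩
  set n : Fin 2 →₀ ℕ := Finsupp.single 0 N + Finsupp.single 1 N
  refine ⟨_, coe_mem_adjoin_of_isGlobal (hF.trunc' n), fun d hd => ?_⟩
  have hdn : d ≤ n := by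
    intro i
    fin_cases i <;> simp [n] <;> omega
  rw [coeff_coe, MvPowerSeries.coeff_trunc', if_pos hdn]
end
end
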